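/- Let λ₁ and λ₂ be finite Borel measures on a compact metric space X, let T : X → Y be a measurable map into a measurable space Y whose σ-algebra is countably generated and contains all singleton sets, and let μ be a σ-finite measure on Y with T_*λ₁ ≪ μ and T_*λ₂ ≪ μ. Let (λ_t^1) and (λ_t^2) be (T,μ)-disintegrations of λ₁ and λ₂ respectively. Assume λ₁ ≪ λ₂ and λ₂ ≪ λ₁, and let g be a measurable function with λ₁ = λ₂.withDensity g (a Radon–Nikodym derivative of λ₁ with respect to λ₂). Then for μ-a.e. t one has λ_t^1 ≪ λ_t^2, λ_t^2 ≪ λ_t^1, and λ_t^1 = (λ_t^2).withDensity g. -/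

import Mathlib

/-!
Since `ν₁ = ν₂.withDensity g`, the family `t ↦ (lam₂ t).withDensity g` is a second disintegration
of `ν₁`. Disintegrations of a finite measure are unique `μ`-a.e.: for a fixed set `A` the fibre
masses `t ↦ lam t A` of both have integral `ν₁ (A ∩ T ⁻¹' B)` over every `B`, so they agree a.e.,
and on a countably generated space countably many such sets determine a finite measure. The reverse
absolute continuity holds because `g ≠ 0` holds `ν₂`-a.e. (as `ν₂ ≪ ν₁`), hence `lam₂ t`-a.e.
for a.e. `t`.
-/

open MeasureTheory ENNReal

/-- A `(T, μ)`-disintegration of a measure `ν` on `X`. -/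
def IsDisintegration {X Y : Type*} [MeasurableSpace X] [MeasurableSpace Y]
    (ν : Measure X) (T : X → Y) (μ : Measure Y) (lam : Y → Measure X) : Prop :=
  (∀ᵐ t ∂μ, lam t ((T ⁻¹' {t})ᶜ) = 0) ∧
  (∀ f : X → ℝ≥0∞, Measurable f →
      AEMeasurable (fun t => ∫⁻ x, f x ∂(lam t)) μ) ∧
  (∀ f : X → ℝ≥0∞, Measurable f →
      ∫⁻ x, f x ∂ν = ∫⁻ t, ∫⁻ x, f x ∂(lam t) ∂μ)

lemma countable_generatePiSystem {α : Type*} {S : Set (Set α)} (hS : S.Countable) :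
    (generatePiSystem S).Countable := by
  refine Set.Countable.mono ?_
    ((Set.countable_ofPred_finite_subset hS).image (fun F => ⋂₀ F))
  intro t ht
  induction ht with
  | base h =>
      exact ⟨{_}, ⟨Set.finite_singleton _, by simpa⟩, Set.sInter_singleton _⟩
  | inter _ _ _ ih1 ih2 =>
      obtain ⟨F, ⟨hFfin, hFS⟩, rfl⟩ := ih1
      obtain ⟨G, ⟨hGfin, hGS⟩, rfl⟩ := ih2
      exact ⟨F ∪ G, ⟨hFfin.union hGfin, Set.union_subset hFS hGS⟩, Set.sInter_union F G⟩

lemma ae_eq_of_forall_ae_apply_eq {X Y : Type*} [MeasurableSpace X]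
    [MeasurableSpace.CountablyGenerated X] [MeasurableSpace Y] {μ : Measure Y}
    {ρ₁ ρ₂ : Y → Measure X} (hfin : ∀ᵐ t ∂μ, IsFiniteMeasure (ρ₁ t))
    (h : ∀ A, MeasurableSet A → ∀ᵐ t ∂μ, ρ₁ t A = ρ₂ t A) :
    ∀ᵐ t ∂μ, ρ₁ t = ρ₂ t := by
  set C := generatePiSystem (MeasurableSpace.countableGeneratingSet X)
  have hgen : ‹MeasurableSpace X› = MeasurableSpace.generateFrom C := by
    rw [generateFrom_generatePiSystem_eq, MeasurableSpace.generateFrom_countableGeneratingSet]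
  have hC : ∀ᵐ t ∂μ, ∀ A ∈ C, ρ₁ t A = ρ₂ t A :=
    (ae_ball_iff (countable_generatePiSystem
      MeasurableSpace.countable_countableGeneratingSet)).2
      fun A hA => h A (hgen ▸ MeasurableSpace.measurableSet_generateFrom hA)
  filter_upwards [hC, h _ MeasurableSet.univ, hfin] with t hCt huniv _
  exact ext_of_generate_finite C hgen (isPiSystem_generatePiSystem _) hCt huniv

namespace IsDisintegration

variable {X Y : Type*} [MeasurableSpace X] [MeasurableSpace Y] {ν : Measure X} {T : X → Y}
  {μ : Measure Y} {lam : Y → Measure X}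

lemma aemeasurable_apply (h : IsDisintegration ν T μ lam) {A : Set X} (hA : MeasurableSet A) :
    AEMeasurable (fun t => lam t A) μ := by
  simpa only [lintegral_indicator_one hA] using h.2.1 _ (measurable_one.indicator hA)

lemma lintegral_apply (h : IsDisintegration ν T μ lam) {A : Set X} (hA : MeasurableSet A) :
    ∫⁻ t, lam t A ∂μ = ν A := by
  simpa only [lintegral_indicator_one hA] using (h.2.2 _ (measurable_one.indicator hA)).symm

lemma ae_isFiniteMeasure [IsFiniteMeasure ν] (h : IsDisintegration ν T μ lam) :
    ∀ᵐ t ∂μ, IsFiniteMeasure (lam t) := by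
  refine (ae_lt_top' (h.aemeasurable_apply MeasurableSet.univ) ?_).mono fun t ht => ⟨ht⟩
  rw [h.lintegral_apply MeasurableSet.univ]
  exact measure_ne_top ν _

lemma ae_ae_of_ae (h : IsDisintegration ν T μ lam) {p : X → Prop}
    (hp : MeasurableSet {x | p x}) (hν : ∀ᵐ x ∂ν, p x) : ∀ᵐ t ∂μ, ∀ᵐ x ∂lam t, p x := by
  have hnull : ∫⁻ t, lam t {x | p x}ᶜ ∂μ = 0 := by
    rw [h.lintegral_apply hp.compl]
    exact hν
  exact (lintegral_eq_zero_iff' (h.aemeasurable_apply hp.compl)).1 hnull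

lemma setLIntegral_lintegral (hT : Measurable T) (h : IsDisintegration ν T μ lam)
    {f : X → ℝ≥0∞} (hf : Measurable f) {B : Set Y} (hB : MeasurableSet B) :
    ∫⁻ t in B, ∫⁻ x, f x ∂(lam t) ∂μ = ∫⁻ x in T ⁻¹' B, f x ∂ν := by
  rw [← lintegral_indicator (hT hB), h.2.2 _ (hf.indicator (hT hB)), ← lintegral_indicator hB]
  refine lintegral_congr_ae ?_
  filter_upwards [h.1] with t ht
  have hfibre : ∀ᵐ x ∂lam t, T x = t := ht
  by_cases htB : t ∈ B
  · rw [Set.indicator_of_mem htB]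
    refine lintegral_congr_ae (hfibre.mono fun x hx => ?_)
    exact (Set.indicator_of_mem (Set.mem_preimage.2 (hx ▸ htB)) f).symm
  · rw [Set.indicator_of_notMem htB, eq_comm]
    refine (lintegral_congr_ae (hfibre.mono fun x hx => ?_)).trans lintegral_zero
    exact Set.indicator_of_notMem (fun hxB => htB (hx ▸ Set.mem_preimage.1 hxB)) f

lemma setLIntegral_apply (hT : Measurable T) (h : IsDisintegration ν T μ lam) {A : Set X}
    (hA : MeasurableSet A) {B : Set Y} (hB : MeasurableSet B) :
    ∫⁻ t in B, lam t A ∂μ = ν (A ∩ T ⁻¹' B) := by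
  simp_rw [← lintegral_indicator_one hA]
  rw [h.setLIntegral_lintegral hT (measurable_one.indicator hA) hB, lintegral_indicator_one hA,
    Measure.restrict_apply hA]

lemma withDensity (h : IsDisintegration ν T μ lam) {g : X → ℝ≥0∞} (hg : Measurable g) :
    IsDisintegration (ν.withDensity g) T μ fun t => (lam t).withDensity g := by
  refine ⟨?_, fun f hf => ?_, fun f hf => ?_⟩
  · filter_upwards [h.1] with t ht
    exact withDensity_absolutelyContinuous _ _ ht
  · simp_rw [lintegral_withDensity_eq_lintegral_mul _ hg hf]
    exact h.2.1 _ (hg.mul hf)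
  · simp_rw [lintegral_withDensity_eq_lintegral_mul _ hg hf]
    exact h.2.2 _ (hg.mul hf)

theorem ae_eq [MeasurableSpace.CountablyGenerated X] [IsFiniteMeasure ν] (hT : Measurable T)
    {lam' : Y → Measure X} (h : IsDisintegration ν T μ lam)
    (h' : IsDisintegration ν T μ lam') : ∀ᵐ t ∂μ, lam t = lam' t := by
  refine ae_eq_of_forall_ae_apply_eq h.ae_isFiniteMeasure fun A hA => ?_
  refine (h.aemeasurable_apply hA).ae_eq_of_forall_setLIntegral_eq (h'.aemeasurable_apply hA)
    ?_ ?_ fun B hB _ => ?_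
  · exact (h.lintegral_apply hA).trans_ne (measure_ne_top ν A)
  · exact (h'.lintegral_apply hA).trans_ne (measure_ne_top ν A)
  · rw [h.setLIntegral_apply hT hA hB, h'.setLIntegral_apply hT hA hB]

end IsDisintegration

theorem disintegration_absolutelyContinuous_withDensity_general
    {X Y : Type*} [MetricSpace X] [CompactSpace X]
    [MeasurableSpace X] [BorelSpace X]
    [MeasurableSpace Y]
    (ν₁ ν₂ : Measure X) [IsFiniteMeasure ν₁]
    (T : X → Y) (hT : Measurable T)
    (μ : Measure Y)
    (lam₁ lam₂ : Y → Measure X)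
    (hdis₁ : IsDisintegration ν₁ T μ lam₁)
    (hdis₂ : IsDisintegration ν₂ T μ lam₂)
    (h₂₁ : ν₂ ≪ ν₁)
    (g : X → ℝ≥0∞) (hg : Measurable g) (hgd : ν₁ = ν₂.withDensity g) :
    ∀ᵐ t ∂μ, lam₁ t ≪ lam₂ t ∧ lam₂ t ≪ lam₁ t ∧ lam₁ t = (lam₂ t).withDensity g := by
  have hdis : IsDisintegration ν₁ T μ fun t => (lam₂ t).withDensity g :=
    hgd ▸ hdis₂.withDensity hg
  have hg_ne_zero : ∀ᵐ x ∂ν₂, g x ≠ 0 :=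
    h₂₁.ae_le (hgd ▸ (ae_withDensity_iff hg).2 (ae_of_all _ fun _ => id))
  filter_upwards [hdis₁.ae_eq hT hdis,
    hdis₂.ae_ae_of_ae (hg (measurableSet_singleton 0)).compl hg_ne_zero] with t heq hgt
  exact ⟨heq ▸ withDensity_absolutelyContinuous _ _,
    heq ▸ withDensity_absolutelyContinuous' hg.aemeasurable hgt, heq⟩

theorem disintegration_absolutelyContinuous_withDensity
    {X Y : Type*} [MetricSpace X] [CompactSpace X]
    [MeasurableSpace X] [BorelSpace X]
    [MeasurableSpace Y] [MeasurableSpace.CountablyGenerated Y] [MeasurableSingletonClass Y]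
    (ν₁ ν₂ : Measure X) [IsFiniteMeasure ν₁] [IsFiniteMeasure ν₂]
    (T : X → Y) (hT : Measurable T)
    (μ : Measure Y) [SigmaFinite μ]
    (habs₁ : ν₁.map T ≪ μ) (habs₂ : ν₂.map T ≪ μ)
    (lam₁ lam₂ : Y → Measure X)
    (hdis₁ : IsDisintegration ν₁ T μ lam₁)
    (hdis₂ : IsDisintegration ν₂ T μ lam₂)
    (h₁₂ : ν₁ ≪ ν₂) (h₂₁ : ν₂ ≪ ν₁)
    (g : X → ℝ≥0∞) (hg : Measurable g) (hgd : ν₁ = ν₂.withDensity g) :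
    ∀ᵐ t ∂μ, lam₁ t ≪ lam₂ t ∧ lam₂ t ≪ lam₁ t ∧ lam₁ t = (lam₂ t).withDensity g :=
  disintegration_absolutelyContinuous_withDensity_general ν₁ ν₂ T hT μ lam₁ lam₂ hdis₁ hdis₂ h₂₁ g
    hg hgd
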